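/- Let F be a family of Borel functions f : ℝ^s → ℝ such that f∘Y is P-integrable for every f ∈ F. Assume: (i) the central subspace S_{Y|X} is itself a dimension reduction subspace; (ii) for each f ∈ F, the central mean subspace S_{E[f(Y)|X]} is itself a mean dimension reduction subspace for f; and (iii) for every subspace S of ℝ^p, if E[f(Y)|σ(X)] = E[f(Y)|σ(P_S∘X)] P-a.e. for all f ∈ F, then Y and X are conditionally independent given σ(P_S∘X). Then the central subspace S_{Y|X} is contained in span{ S_{E[f(Y)|X]} : f ∈ F } (the supremum of the central mean subspaces). (Lemma 1, part 2.) -/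

import Mathlib

open MeasureTheory ProbabilityTheory Filter

/-- The map `x ↦ P_S x`, the orthogonal projection onto `S` viewed as a map of the
ambient Euclidean space. -/
noncomputable def projFn {p : ℕ} (S : Submodule ℝ (EuclideanSpace ℝ (Fin p))) :
    EuclideanSpace ℝ (Fin p) → EuclideanSpace ℝ (Fin p) :=
  fun v => (S.orthogonalProjectionOnto v : EuclideanSpace ℝ (Fin p))

/-- The σ-algebra `σ(P_S ∘ X)` generated by the projected random vector. -/
noncomputable def sigmaProj {Ω : Type*} {p : ℕ}
    (S : Submodule ℝ (EuclideanSpace ℝ (Fin p))) (X : Ω → EuclideanSpace ℝ (Fin p)) :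
    MeasurableSpace Ω :=
  MeasurableSpace.comap (fun ω => projFn S (X ω)) inferInstance

lemma sigmaProj_le {Ω : Type*} {p : ℕ} [mΩ : MeasurableSpace Ω]
    (S : Submodule ℝ (EuclideanSpace ℝ (Fin p))) {X : Ω → EuclideanSpace ℝ (Fin p)}
    (hX : Measurable X) : sigmaProj S X ≤ mΩ := by
  have h : Measurable (fun ω => projFn S (X ω)) := by
    have : Measurable (projFn S) :=
      (S.subtypeL.comp (S.orthogonalProjectionOnto)).continuous.measurable
    exact this.comp hX
  exact h.comap_le

/-- `S` is a dimension reduction subspace: `Y ⫫ X | σ(P_S ∘ X)`. -/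
def IsDRS {Ω : Type*} {p s : ℕ} [mΩ : MeasurableSpace Ω] [StandardBorelSpace Ω]
    (P : Measure Ω) [IsFiniteMeasure P]
    (X : Ω → EuclideanSpace ℝ (Fin p)) (Y : Ω → EuclideanSpace ℝ (Fin s))
    (hX : Measurable X) (S : Submodule ℝ (EuclideanSpace ℝ (Fin p))) : Prop :=
  CondIndep (sigmaProj S X) (MeasurableSpace.comap Y inferInstance)
    (MeasurableSpace.comap X inferInstance) (sigmaProj_le S hX) P

/-- The central subspace `S_{Y|X}`: the intersection of all dimension reduction subspaces. -/
noncomputable def centralSubspace {Ω : Type*} {p s : ℕ} [mΩ : MeasurableSpace Ω]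
    [StandardBorelSpace Ω] (P : Measure Ω) [IsFiniteMeasure P]
    (X : Ω → EuclideanSpace ℝ (Fin p)) (Y : Ω → EuclideanSpace ℝ (Fin s))
    (hX : Measurable X) : Submodule ℝ (EuclideanSpace ℝ (Fin p)) :=
  sInf {S | IsDRS P X Y hX S}

/-- `S` is a mean dimension reduction subspace for `f`:
`E[f(Y) | σ(X)] = E[f(Y) | σ(P_S ∘ X)]` a.e. -/
def IsMeanDRS {Ω : Type*} {p s : ℕ} [mΩ : MeasurableSpace Ω] (P : Measure Ω)
    (X : Ω → EuclideanSpace ℝ (Fin p)) (Y : Ω → EuclideanSpace ℝ (Fin s))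
    (f : EuclideanSpace ℝ (Fin s) → ℝ) (S : Submodule ℝ (EuclideanSpace ℝ (Fin p))) : Prop :=
  P[(fun ω => f (Y ω))|MeasurableSpace.comap X inferInstance]
    =ᵐ[P] P[(fun ω => f (Y ω))|sigmaProj S X]

/-- The central mean subspace `S_{E[f(Y)|X]}`: the intersection of all mean dimension
reduction subspaces for `f`. -/
noncomputable def centralMeanSubspace {Ω : Type*} {p s : ℕ} [mΩ : MeasurableSpace Ω]
    (P : Measure Ω) (X : Ω → EuclideanSpace ℝ (Fin p)) (Y : Ω → EuclideanSpace ℝ (Fin s))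
    (f : EuclideanSpace ℝ (Fin s) → ℝ) : Submodule ℝ (EuclideanSpace ℝ (Fin p)) :=
  sInf {S | IsMeanDRS P X Y f S}

/-! Mean dimension reduction passes to larger subspaces: for `S_f ≤ T`, the σ-algebra
`σ(P_T ∘ X)` lies between `σ(P_{S_f} ∘ X)` and `σ(X)`, and conditioning on it agrees with
conditioning on either end. Hence `T = ⨆ f ∈ F, S_f` is a mean dimension reduction subspace for
every `f ∈ F` at once, so by (iii) it is a dimension reduction subspace and contains the
central subspace. -/

section CondExp

variable {α E : Type*} [NormedAddCommGroup E] [NormedSpace ℝ E] [CompleteSpace E]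
  {m₁ m₂ m₃ m₀ : MeasurableSpace α} {μ : Measure α} [IsFiniteMeasure μ] {f : α → E}

lemma condExp_ae_eq_condExp_of_le_of_le (h₁₂ : m₁ ≤ m₂) (h₂₃ : m₂ ≤ m₃) (h₃ : m₃ ≤ m₀)
    (h : μ[f|m₃] =ᵐ[μ] μ[f|m₁]) : μ[f|m₃] =ᵐ[μ] μ[f|m₂] := by
  have h₁_meas : StronglyMeasurable[m₂] (μ[f|m₁]) := stronglyMeasurable_condExp.mono h₁₂
  calc μ[f|m₃] =ᵐ[μ] μ[f|m₁] := h
    _ = μ[μ[f|m₁]|m₂] :=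
        (condExp_of_stronglyMeasurable (h₂₃.trans h₃) h₁_meas integrable_condExp).symm
    _ =ᵐ[μ] μ[μ[f|m₃]|m₂] := condExp_congr_ae h.symm
    _ =ᵐ[μ] μ[f|m₂] := condExp_condExp_of_le h₂₃ h₃

end CondExp

section Projection

variable {Ω : Type*} {p : ℕ}

lemma measurable_projFn (S : Submodule ℝ (EuclideanSpace ℝ (Fin p))) :
    Measurable (projFn S) :=
  (S.subtypeL.comp S.orthogonalProjectionOnto).continuous.measurable

lemma projFn_comp_projFn_of_le {S T : Submodule ℝ (EuclideanSpace ℝ (Fin p))} (h : S ≤ T) :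
    projFn S ∘ projFn T = projFn S := by
  funext v
  simp only [Function.comp, projFn]
  rw [← Submodule.starProjection_apply T, Submodule.orthogonalProjectionOnto_starProjection_of_le h]

lemma sigmaProj_le_comap (S : Submodule ℝ (EuclideanSpace ℝ (Fin p)))
    (X : Ω → EuclideanSpace ℝ (Fin p)) :
    sigmaProj S X ≤ MeasurableSpace.comap X inferInstance :=
  MeasurableSpace.comap_le_comap_of_eq_comp _ (measurable_projFn S) rfl

lemma sigmaProj_mono {S T : Submodule ℝ (EuclideanSpace ℝ (Fin p))} (h : S ≤ T)
    (X : Ω → EuclideanSpace ℝ (Fin p)) : sigmaProj S X ≤ sigmaProj T X :=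
  MeasurableSpace.comap_le_comap_of_eq_comp _ (measurable_projFn S)
    (funext fun ω => (congrFun (projFn_comp_projFn_of_le h) (X ω)).symm)

end Projection

lemma IsMeanDRS.mono {Ω : Type*} {p s : ℕ} [MeasurableSpace Ω] {P : Measure Ω}
    [IsFiniteMeasure P] {X : Ω → EuclideanSpace ℝ (Fin p)} {Y : Ω → EuclideanSpace ℝ (Fin s)}
    {f : EuclideanSpace ℝ (Fin s) → ℝ} {S T : Submodule ℝ (EuclideanSpace ℝ (Fin p))}
    (hS : IsMeanDRS P X Y f S) (hST : S ≤ T) (hX : Measurable X) : IsMeanDRS P X Y f T :=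
  condExp_ae_eq_condExp_of_le_of_le (sigmaProj_mono hST X) (sigmaProj_le_comap T X)
    hX.comap_le hS

theorem centralSubspace_le_span_centralMeanSubspaces_general
    {Ω : Type*} {p s : ℕ} [mΩ : MeasurableSpace Ω] [StandardBorelSpace Ω]
    (P : Measure Ω) [IsProbabilityMeasure P]
    (X : Ω → EuclideanSpace ℝ (Fin p)) (Y : Ω → EuclideanSpace ℝ (Fin s))
    (hX : Measurable X)
    (F : Set (EuclideanSpace ℝ (Fin s) → ℝ))
    (hmean : ∀ f ∈ F, IsMeanDRS P X Y f (centralMeanSubspace P X Y f))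
    (himp : ∀ S : Submodule ℝ (EuclideanSpace ℝ (Fin p)),
      (∀ f ∈ F, P[(fun ω => f (Y ω))|MeasurableSpace.comap X inferInstance]
        =ᵐ[P] P[(fun ω => f (Y ω))|sigmaProj S X]) →
      CondIndep (sigmaProj S X) (MeasurableSpace.comap Y inferInstance)
        (MeasurableSpace.comap X inferInstance) (sigmaProj_le S hX) P) :
    centralSubspace P X Y hX ≤ ⨆ f ∈ F, centralMeanSubspace P X Y f := by
  have hsup_mean : ∀ f ∈ F, IsMeanDRS P X Y f (⨆ g ∈ F, centralMeanSubspace P X Y g) :=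
    fun f hf => (hmean f hf).mono (le_biSup (centralMeanSubspace P X Y) hf) hX
  exact sInf_le (himp _ hsup_mean)

/-- Lemma 1, part 2: if `E[f(Y)|σ(X)] = E[f(Y)|σ(P_S∘X)]` for all `f ∈ F` implies the
conditional independence of `Y` and `X` given `σ(P_S∘X)`, then the central subspace is
contained in the span of the central mean subspaces over `F`. -/
theorem centralSubspace_le_span_centralMeanSubspaces
    {Ω : Type*} {p s : ℕ} [mΩ : MeasurableSpace Ω] [StandardBorelSpace Ω]
    (P : Measure Ω) [IsProbabilityMeasure P]
    (X : Ω → EuclideanSpace ℝ (Fin p)) (Y : Ω → EuclideanSpace ℝ (Fin s))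
    (hX : Measurable X) (hY : Measurable Y)
    (F : Set (EuclideanSpace ℝ (Fin s) → ℝ))
    (hFmeas : ∀ f ∈ F, Measurable f)
    (hFint : ∀ f ∈ F, Integrable (fun ω => f (Y ω)) P)
    (hcentral : IsDRS P X Y hX (centralSubspace P X Y hX))
    (hmean : ∀ f ∈ F, IsMeanDRS P X Y f (centralMeanSubspace P X Y f))
    (himp : ∀ S : Submodule ℝ (EuclideanSpace ℝ (Fin p)),
      (∀ f ∈ F, P[(fun ω => f (Y ω))|MeasurableSpace.comap X inferInstance]
        =ᵐ[P] P[(fun ω => f (Y ω))|sigmaProj S X]) →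
      CondIndep (sigmaProj S X) (MeasurableSpace.comap Y inferInstance)
        (MeasurableSpace.comap X inferInstance) (sigmaProj_le S hX) P) :
    centralSubspace P X Y hX ≤ ⨆ f ∈ F, centralMeanSubspace P X Y f :=
  centralSubspace_le_span_centralMeanSubspaces_general (mΩ := mΩ) P X Y hX F hmean himp
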